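/- arXiv:2512.01226 — 3 statements merged into one kernel-verified Lean document; each statement's English description precedes it below -/
import Mathlib

section
/- Every nonnegative integer n×n matrix whose row sums and column sums all equal k can be written as a sum of k permutation matrices. -/
/-!
Row sums `k > 0` and column sums at most `k` give Hall's condition for the support of `M`:
the mass of any `s` rows, `k * #s`, lies in the columns that meet `s`, which carry at most
`k` each. Hall's theorem then yields a permutation matrix `P ≤ M`, and `M - P` has line sums
`k - 1`, so induction on `k` finishes.
-/

open Finset Equiv

namespace Matrix

section Hall

variable {ι κ : Type*} [Fintype ι] [Fintype κ]

theorem card_le_card_filter_exists_pos (M : Matrix ι κ ℕ) {k : ℕ} (hk : 0 < k)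
    (hrow : ∀ i, ∑ j, M i j = k) (hcol : ∀ j, ∑ i, M i j ≤ k) (s : Finset ι) :
    #s ≤ #{j | ∃ i ∈ s, 0 < M i j} := by
  set N : Finset κ := {j | ∃ i ∈ s, 0 < M i j}
  have hsupp : ∀ i ∈ s, ∑ j ∈ N, M i j = ∑ j, M i j := fun i hi =>
    sum_subset (subset_univ N) fun j _ hj => by
      by_contra hne
      exact hj (mem_filter.2 ⟨mem_univ j, i, hi, Nat.pos_of_ne_zero hne⟩)
  refine Nat.le_of_mul_le_mul_right ?_ hk
  calc #s * k = ∑ i ∈ s, ∑ j ∈ N, M i j := by simp [sum_congr rfl hsupp, hrow]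
    _ ≤ ∑ i, ∑ j ∈ N, M i j := sum_le_sum_of_subset (subset_univ s)
    _ = ∑ j ∈ N, ∑ i, M i j := sum_comm
    _ ≤ #N * k := sum_le_card_nsmul N _ k fun j _ => hcol j

theorem exists_injective_forall_pos (M : Matrix ι κ ℕ) {k : ℕ} (hk : 0 < k)
    (hrow : ∀ i, ∑ j, M i j = k) (hcol : ∀ j, ∑ i, M i j ≤ k) :
    ∃ f : ι → κ, f.Injective ∧ ∀ i, 0 < M i (f i) :=
  -- instance search does not see through the application `M i j` of a `Matrix`
  (@Fintype.all_card_le_filter_rel_iff_exists_injective _ _ _ (fun i j => 0 < M i j)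
    fun _ _ => Nat.decLt _ _).1 (card_le_card_filter_exists_pos M hk hrow hcol)

end Hall

variable {ι : Type*} [Fintype ι]

theorem exists_perm_forall_pos (M : Matrix ι ι ℕ) {k : ℕ} (hk : 0 < k)
    (hrow : ∀ i, ∑ j, M i j = k) (hcol : ∀ j, ∑ i, M i j ≤ k) :
    ∃ σ : Perm ι, ∀ i, 0 < M i (σ i) := by
  obtain ⟨f, hf, hpos⟩ := exists_injective_forall_pos M hk hrow hcol
  exact ⟨.ofBijective f hf.bijective_of_finite, hpos⟩

variable [DecidableEq ι]

theorem exists_eq_permMatrix_add (M : Matrix ι ι ℕ) {k : ℕ}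
    (hrow : ∀ i, ∑ j, M i j = k + 1) (hcol : ∀ j, ∑ i, M i j = k + 1) :
    ∃ (σ : Perm ι) (M' : Matrix ι ι ℕ), M = σ.permMatrix ℕ + M' ∧
      (∀ i, ∑ j, M' i j = k) ∧ ∀ j, ∑ i, M' i j = k := by
  obtain ⟨σ, hσ⟩ := exists_perm_forall_pos M k.succ_pos hrow fun j => (hcol j).le
  have hle : ∀ i j, σ.permMatrix ℕ i j ≤ M i j := fun i j => by
    rcases eq_or_ne j (σ i) with rfl | hj
    · simpa [Nat.one_le_iff_ne_zero, pos_iff_ne_zero] using hσ i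
    · simp [hj.symm]
  have hM : M = σ.permMatrix ℕ + (M - σ.permMatrix ℕ) := by
    ext i j
    exact (add_tsub_cancel_of_le (hle i j)).symm
  refine ⟨σ, _, hM, fun i => ?_, fun j => ?_⟩
  · have := hrow i
    rw [hM] at this
    simp only [add_apply, sum_add_distrib,
      sum_row_of_mem_rowStochastic permMatrix_mem_rowStochastic] at this
    omega
  · have := hcol j
    rw [hM] at this
    simp only [add_apply, sum_add_distrib,
      sum_col_of_mem_colStochastic permMatrix_mem_colStochastic] at this
    omega

theorem exists_eq_sum_permMatrix (M : Matrix ι ι ℕ) {k : ℕ}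
    (hrow : ∀ i, ∑ j, M i j = k) (hcol : ∀ j, ∑ i, M i j = k) :
    ∃ ρ : Fin k → Perm ι, M = ∑ m, (ρ m).permMatrix ℕ := by
  induction k generalizing M with
  | zero =>
    refine ⟨Fin.elim0, ?_⟩
    ext i j
    simpa using (sum_eq_zero_iff.1 (hrow i)) j (mem_univ j)
  | succ k ih =>
    obtain ⟨σ, M', rfl, hrow', hcol'⟩ := exists_eq_permMatrix_add M hrow hcol
    obtain ⟨ρ, rfl⟩ := ih M' hrow' hcol'
    exact ⟨Fin.cons σ ρ, by simp [Fin.sum_univ_succ]⟩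

end Matrix

/-- Integer Birkhoff–von Neumann: a nonnegative integer square matrix whose row
and column sums all equal `k` is a sum of `k` permutation matrices. -/
theorem stmt8 {n k : ℕ} (M : Matrix (Fin n) (Fin n) ℕ)
    (hrow : ∀ i, ∑ j, M i j = k) (hcol : ∀ j, ∑ i, M i j = k) :
    ∃ ρ : Fin k → Equiv.Perm (Fin n),
      ∀ i j, M i j = ∑ m, if (ρ m) i = j then 1 else 0 := by
  obtain ⟨ρ, rfl⟩ := M.exists_eq_sum_permMatrix hrow hcol
  exact ⟨ρ, fun i j => by simp [Matrix.sum_apply, Equiv.toPEquiv_apply]⟩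
end

section
/- Suppose Φ(z, λ) satisfies Φ(z, λ) = Φ(z^{-1}, λ) and is monic of degree m in λ. If for a 2-torsion point z_0 ∈ {±1}^d all roots of λ ↦ Φ(z_0, λ) together give m points (with multiplicity) and the critical point equations Φ = z_1 ∂Φ/∂z_1 = ... = z_d ∂Φ/∂z_d = 0 have finitely many solutions, then there are at least 2^d · m critical points counted with multiplicity. -/
/-- Evaluation of a Laurent polynomial at a point of the torus. -/
noncomputable def evalAt {n : ℕ} (f : AddMonoidAlgebra ℂ (Fin n → ℤ)) (x : Fin n → ℂˣ) : ℂ :=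
  ∑ a ∈ f.coeff.support, f.coeff a * ∏ i, (x i : ℂ) ^ a i

/-- The logarithmic derivative `z_i ∂/∂z_i` on Laurent polynomials. -/
noncomputable def logDeriv' {n : ℕ} (i : Fin n) (f : AddMonoidAlgebra ℂ (Fin n → ℤ)) :
    AddMonoidAlgebra ℂ (Fin n → ℤ) :=
  ∑ a ∈ f.coeff.support, AddMonoidAlgebra.single a ((a i : ℂ) * f.coeff a)

/-- The univariate polynomial in `λ` obtained from `Φ` by evaluating its Laurent
polynomial coefficients at `z`. -/
noncomputable def fiberPoly {d : ℕ} (Φ : Polynomial (AddMonoidAlgebra ℂ (Fin d → ℤ)))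
    (z : Fin d → ℂˣ) : Polynomial ℂ :=
  ∑ k ∈ Φ.support, Polynomial.C (evalAt (Φ.coeff k) z) * Polynomial.X ^ k

/-- `(z, l)` is a critical point: `Φ(z,l) = 0` and `z_i ∂Φ/∂z_i (z,l) = 0` for all `i`. -/
def IsCritical {d : ℕ} (Φ : Polynomial (AddMonoidAlgebra ℂ (Fin d → ℤ)))
    (z : Fin d → ℂˣ) (l : ℂ) : Prop :=
  (fiberPoly Φ z).eval l = 0 ∧
    ∀ i : Fin d,
      (∑ k ∈ Φ.support, Polynomial.C (evalAt (logDeriv' i (Φ.coeff k)) z)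
          * Polynomial.X ^ k).eval l = 0

/-- The inclusion of `{±1}` into `ℂ^×`. -/
noncomputable def cu : ℤˣ →* ℂˣ := Units.map (Int.castRingHom ℂ).toMonoidHom

/-! The symmetry `Φ(z, λ) = Φ(z⁻¹, λ)` forces every Laurent coefficient of `Φ` to be even in
the exponent, because the torus characters `z ↦ z^a` are linearly independent. Then
`z_i ∂Φ/∂z_i` is odd in the exponent, so it vanishes wherever `z⁻¹ = z`, i.e. at the corners
`{±1}^d`. Hence every root of the fiber polynomial over a corner is a critical point, and the
`m` roots over each of the `2^d` corners give the count. -/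

open Finset

noncomputable def torusChar {n : ℕ} (a : Fin n → ℤ) : (Fin n → ℂˣ) →* ℂ where
  toFun x := ∏ i, (x i : ℂ) ^ a i
  map_one' := by simp
  map_mul' x y := by simp only [Pi.mul_apply, Units.val_mul, mul_zpow, prod_mul_distrib]

@[simp]
lemma torusChar_apply {n : ℕ} (a : Fin n → ℤ) (x : Fin n → ℂˣ) :
    torusChar a x = ∏ i, (x i : ℂ) ^ a i := rfl

lemma torusChar_mulSingle {n : ℕ} (a : Fin n → ℤ) (i : Fin n) (u : ℂˣ) :
    torusChar a (Pi.mulSingle i u) = (u : ℂ) ^ a i := by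
  rw [torusChar_apply, prod_eq_single i (fun j _ hj => by simp [hj]) (by simp)]
  simp

lemma torusChar_injective {n : ℕ} : Function.Injective (torusChar (n := n)) := by
  intro a b hab
  funext i
  have h := congrArg norm <|
    DFunLike.congr_fun hab (Pi.mulSingle i (Units.mk0 (2 : ℂ) two_ne_zero))
  simp only [torusChar_mulSingle, Units.val_mk0, norm_zpow, Complex.norm_two] at h
  exact zpow_right_injective₀ two_pos (by norm_num) h

lemma torusChar_neg {n : ℕ} (a : Fin n → ℤ) (x : Fin n → ℂˣ) :
    torusChar (-a) x = torusChar a x⁻¹ := by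
  simp [zpow_neg]

lemma linearIndependent_torusChar {n : ℕ} :
    LinearIndependent ℂ (fun a : Fin n → ℤ => ⇑(torusChar a)) :=
  (linearIndependent_monoidHom _ ℂ).comp torusChar torusChar_injective

lemma evalAt_eq_linearCombination {n : ℕ} (f : AddMonoidAlgebra ℂ (Fin n → ℤ))
    (x : Fin n → ℂˣ) :
    evalAt f x = Finsupp.linearCombination ℂ (fun a => ⇑(torusChar a)) f.coeff x := by
  simp [evalAt, Finsupp.linearCombination_apply, Finsupp.sum]

lemma coeff_neg_eq_of_evalAt_inv {n : ℕ} {f : AddMonoidAlgebra ℂ (Fin n → ℤ)}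
    (h : ∀ x, evalAt f x⁻¹ = evalAt f x) (a : Fin n → ℤ) : f.coeff (-a) = f.coeff a := by
  have hrefl : Finsupp.equivMapDomain (Equiv.neg _) f.coeff = f.coeff := by
    refine linearIndependent_torusChar.finsuppLinearCombination_injective (funext fun x => ?_)
    rw [Finsupp.linearCombination_equivMapDomain, ← evalAt_eq_linearCombination, ← h]
    simp [evalAt_eq_linearCombination, Finsupp.linearCombination_apply, Finsupp.sum,
      Function.comp_def]
  simpa using DFunLike.congr_fun hrefl a

lemma evalAt_logDeriv' {n : ℕ} (i : Fin n) (f : AddMonoidAlgebra ℂ (Fin n → ℤ))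
    (x : Fin n → ℂˣ) :
    evalAt (logDeriv' i f) x = ∑ a ∈ f.coeff.support, (a i : ℂ) * f.coeff a * torusChar a x := by
  rw [evalAt_eq_linearCombination, logDeriv', AddMonoidAlgebra.coeff_sum, map_sum,
    Finset.sum_apply]
  refine sum_congr rfl fun a _ => ?_
  rw [AddMonoidAlgebra.coeff_single, Finsupp.linearCombination_single, Pi.smul_apply, smul_eq_mul]

lemma evalAt_logDeriv'_eq_zero {n : ℕ} {f : AddMonoidAlgebra ℂ (Fin n → ℤ)}
    (hf : ∀ a, f.coeff (-a) = f.coeff a) {x : Fin n → ℂˣ} (hx : x⁻¹ = x) (i : Fin n) :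
    evalAt (logDeriv' i f) x = 0 := by
  rw [evalAt_logDeriv']
  refine sum_involution (fun a _ => -a) (fun a _ => ?_) (fun a _ hne hfix => ?_)
    (fun a ha => by rwa [Finsupp.mem_support_iff, hf, ← Finsupp.mem_support_iff])
    (fun a _ => neg_neg a)
  · rw [hf, torusChar_neg, hx, Pi.neg_apply]
    push_cast
    ring
  · have : a i = 0 := by have := congrFun hfix i; simp only [Pi.neg_apply] at this; omega
    simp [this] at hne

lemma coeff_fiberPoly {d : ℕ} (Φ : Polynomial (AddMonoidAlgebra ℂ (Fin d → ℤ)))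
    (z : Fin d → ℂˣ) (k : ℕ) :
    (fiberPoly Φ z).coeff k = evalAt (Φ.coeff k) z := by
  simp only [fiberPoly, Polynomial.finsetSum_coeff, Polynomial.coeff_C_mul_X_pow, sum_ite_eq]
  split_ifs with hk
  · rfl
  · simp [Polynomial.notMem_support_iff.mp hk, evalAt]

lemma coeff_coeff_neg_of_fiberPoly_inv {d : ℕ} {Φ : Polynomial (AddMonoidAlgebra ℂ (Fin d → ℤ))}
    (hsym : ∀ z, fiberPoly Φ z = fiberPoly Φ z⁻¹) (k : ℕ) (a : Fin d → ℤ) :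
    (Φ.coeff k).coeff (-a) = (Φ.coeff k).coeff a :=
  coeff_neg_eq_of_evalAt_inv (fun z => by simp only [← coeff_fiberPoly, ← hsym]) a

lemma isCritical_of_mem_roots {d : ℕ} {Φ : Polynomial (AddMonoidAlgebra ℂ (Fin d → ℤ))}
    (hsym : ∀ z, fiberPoly Φ z = fiberPoly Φ z⁻¹) {z : Fin d → ℂˣ} (hz : z⁻¹ = z) {μ : ℂ}
    (hμ : μ ∈ (fiberPoly Φ z).roots) : IsCritical Φ z μ := by
  refine ⟨(Polynomial.mem_roots'.mp hμ).2, fun i => ?_⟩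
  simp [evalAt_logDeriv'_eq_zero (coeff_coeff_neg_of_fiberPoly_inv hsym _) hz]

lemma cu_inv (u : ℤˣ) : (cu u)⁻¹ = cu u := by
  rw [← map_inv, Int.units_inv_eq_self]

theorem stmt14_general {d m : ℕ} (Φ : Polynomial (AddMonoidAlgebra ℂ (Fin d → ℤ)))
    (hsym : ∀ z : Fin d → ℂˣ, fiberPoly Φ z = fiberPoly Φ (fun j => (z j)⁻¹))
    (hroots : ∀ s : Fin d → ℤˣ,
      Multiset.card (fiberPoly Φ (fun i => cu (s i))).roots = m) :
    (∀ s : Fin d → ℤˣ, ∀ μ ∈ (fiberPoly Φ (fun i => cu (s i))).roots,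
        IsCritical Φ (fun i => cu (s i)) μ) ∧
      2 ^ d * m ≤ ∑ s : Fin d → ℤˣ,
        Multiset.card (fiberPoly Φ (fun i => cu (s i))).roots := by
  refine ⟨fun s μ hμ => isCritical_of_mem_roots hsym (funext fun i => cu_inv (s i)) hμ, ?_⟩
  simp [hroots, Fintype.card_units_int]

/-- If `Φ(z,λ)` is monic of degree `m` in `λ` with `Φ(z,λ) = Φ(z⁻¹,λ)`, if over each
2-torsion (corner) point the fiber polynomial has `m` roots counted with multiplicity,
and if the critical point equations have finitely many solutions, then every fiber
root over a corner point is a critical point, giving at least `2^d · m` critical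
points counted with multiplicity. -/
theorem stmt14 {d m : ℕ} (Φ : Polynomial (AddMonoidAlgebra ℂ (Fin d → ℤ)))
    (hmonic : Φ.Monic) (hdeg : Φ.natDegree = m)
    (hsym : ∀ z : Fin d → ℂˣ, fiberPoly Φ z = fiberPoly Φ (fun j => (z j)⁻¹))
    (hroots : ∀ s : Fin d → ℤˣ,
      Multiset.card (fiberPoly Φ (fun i => cu (s i))).roots = m)
    (hfin : {p : (Fin d → ℂˣ) × ℂ | IsCritical Φ p.1 p.2}.Finite) :
    (∀ s : Fin d → ℤˣ, ∀ μ ∈ (fiberPoly Φ (fun i => cu (s i))).roots,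
        IsCritical Φ (fun i => cu (s i)) μ) ∧
      2 ^ d * m ≤ ∑ s : Fin d → ℤˣ,
        Multiset.card (fiberPoly Φ (fun i => cu (s i))).roots :=
  stmt14_general Φ hsym hroots
end

section
/- Let f be a Laurent polynomial in t = (t_1,...,t_n) with support A, let F be a face of the Newton polytope conv(A) with F ∩ A = 𝓕, and let M_𝓕 = N{a − b : a ∈ A, b ∈ 𝓕} be the associated affine monoid. Then for any b ∈ 𝓕, t^{−b} f lies in the monoid algebra C[M_𝓕], and the ideal generated by f in C[Z^n] intersected with C[M_𝓕] is the principal ideal of C[M_𝓕] generated by t^{−b} f. -/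
/-!
The first claim holds because the exponents of `t^{-b} f` are the `a - b`, `a ∈ A`. For the ideal,
write `q = t^{-b} f`: its exponents have `η`-weight `≥ 0`, `0` is one of them, and those of weight
`0` are the `a - b` with `a ∈ 𝓕`, whose negatives `b - a` lie in `M_𝓕`. If `g = h q` has support in
`M_𝓕`, let `h'` be the part of `h` with exponents outside `M_𝓕`; then `h' q` still has support in
`M_𝓕`. Were `h' ≠ 0`, the initial form of `h' q` would be the product of the initial forms of `h'`
and `q`, nonzero since `ℂ[ℤⁿ]` is a domain, so some `a + d` with `a ∉ M_𝓕` and `d` a weight-zero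
exponent of `q` would lie in `M_𝓕`, giving `a = (a + d) + (-d) ∈ M_𝓕`.
-/

/-- Weight of an exponent vector with respect to η. -/
def wt {n : ℕ} (η a : Fin n → ℤ) : ℤ := ∑ i, η i * a i

/-- The affine monoid `M_𝓕 = ℕ{a − b : a ∈ A, b ∈ 𝓕}` associated to a subset
`𝓕 ⊆ A` of lattice points. -/
def Mface {n : ℕ} (A F : Finset (Fin n → ℤ)) : AddSubmonoid (Fin n → ℤ) :=
  AddSubmonoid.closure {x : Fin n → ℤ | ∃ a ∈ A, ∃ b ∈ F, x = a - b}

namespace AddMonoidAlgebra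

variable {k G : Type*}

theorem mul_mem_supported [Semiring k] [AddMonoid G] {M : AddSubmonoid G} {x y : k[G]}
    (hx : x ∈ supported k k (M : Set G)) (hy : y ∈ supported k k (M : Set G)) :
    x * y ∈ supported k k (M : Set G) := by
  classical
  intro m hm
  obtain ⟨a, ha, d, hd, rfl⟩ := Finset.mem_add.mp (support_coeff_mul_subset x y hm)
  exact M.add_mem (hx ha) (hy hd)

section WeightPart

variable [Semiring k] [AddCommGroup G] (φ : G →+ ℤ)

def weightPart (w : ℤ) (p : k[G]) : k[G] :=
  ofCoeff (p.coeff.filter (φ · = w))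

variable {φ}

theorem coeff_weightPart (w : ℤ) (p : k[G]) (x : G) :
    (weightPart φ w p).coeff x = if φ x = w then p.coeff x else 0 :=
  rfl

theorem mem_support_weightPart {w : ℤ} {p : k[G]} {x : G} :
    x ∈ (weightPart φ w p).coeff.support ↔ x ∈ p.coeff.support ∧ φ x = w :=
  Finset.mem_filter

/-- With `u`, `v` the lowest weights of `p`, `q`, this says that the initial form of a product is
the product of the initial forms. -/
theorem weightPart_mul_of_le {u v : ℤ} {p q : k[G]} (hp : ∀ a ∈ p.coeff.support, u ≤ φ a)
    (hq : ∀ d ∈ q.coeff.support, v ≤ φ d) :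
    weightPart φ (u + v) (p * q) = weightPart φ u p * weightPart φ v q := by
  refine ext (Finsupp.ext fun x => ?_)
  have hsub : (weightPart φ u p).coeff.support ⊆ p.coeff.support := Finset.filter_subset _ _
  rw [coeff_weightPart, coeff_mul_apply_left, coeff_mul_apply_left,
    Finsupp.sum_of_support_subset _ hsub (fun a r => r * (weightPart φ v q).coeff (-a + x))
      (fun _ _ => zero_mul _), Finsupp.sum]
  split_ifs with hx
  · refine Finset.sum_congr rfl fun a ha => ?_
    have hwt : φ (-a + x) = -φ a + (u + v) := by rw [φ.map_add, φ.map_neg, hx]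
    rw [coeff_weightPart, coeff_weightPart, hwt]
    by_cases hau : φ a = u
    · rw [if_pos hau, if_pos (by omega)]
    · have hq0 : q.coeff (-a + x) = 0 := Finsupp.notMem_support_iff.mp fun had => by
        have := hp a ha
        have := hq _ had
        omega
      rw [if_neg hau, hq0, zero_mul, mul_zero]
  · refine (Finset.sum_eq_zero fun a _ => ?_).symm
    have hwt : φ (-a + x) = -φ a + φ x := by rw [φ.map_add, φ.map_neg]
    rw [coeff_weightPart, coeff_weightPart, hwt]
    split_ifs with hau hdv
    · omega
    all_goals simp only [zero_mul, mul_zero]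

theorem weightPart_ne_zero {w : ℤ} {p : k[G]} {x : G} (hx : x ∈ p.coeff.support) (hxw : φ x = w) :
    weightPart φ w p ≠ 0 := fun h0 => by
  simpa [h0] using (mem_support_weightPart.mpr ⟨hx, hxw⟩ : x ∈ (weightPart φ w p).coeff.support)

theorem exists_add_mem_support_mul [NoZeroDivisors k[G]] {v : ℤ} {p q : k[G]} (hp : p ≠ 0)
    (hq : ∀ d ∈ q.coeff.support, v ≤ φ d) (hqv : weightPart φ v q ≠ 0) :
    ∃ a ∈ p.coeff.support, ∃ d ∈ q.coeff.support, φ d = v ∧ a + d ∈ (p * q).coeff.support := by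
  classical
  obtain ⟨a₀, ha₀, hmin⟩ := p.coeff.support.exists_min_image φ
    (Finsupp.support_nonempty_iff.mpr fun h => hp (ext h))
  obtain ⟨e, he⟩ := Finsupp.support_nonempty_iff.mpr fun h =>
    mul_ne_zero (weightPart_ne_zero (φ := φ) ha₀ rfl) hqv (ext h)
  obtain ⟨a, ha, d, hd, rfl⟩ := Finset.mem_add.mp (support_coeff_mul_subset _ _ he)
  obtain ⟨ha, -⟩ := mem_support_weightPart.mp ha
  obtain ⟨hd, hdv⟩ := mem_support_weightPart.mp hd
  rw [← weightPart_mul_of_le hmin hq, mem_support_weightPart] at he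
  exact ⟨a, ha, d, hd, hdv, he.1⟩

end WeightPart

theorem mem_supported_of_mul_mem_supported [Ring k] [AddCommGroup G] [NoZeroDivisors k[G]]
    {M : AddSubmonoid G} (φ : G →+ ℤ) {p q : k[G]} (hqM : q ∈ supported k k (M : Set G))
    (hq : ∀ d ∈ q.coeff.support, 0 ≤ φ d) (hq₀ : weightPart φ 0 q ≠ 0)
    (hunit : ∀ d ∈ q.coeff.support, φ d = 0 → -d ∈ M) (hpq : p * q ∈ supported k k (M : Set G)) :
    p ∈ supported k k (M : Set G) := by
  classical
  set pIn : k[G] := ofCoeff (p.coeff.filter (· ∈ M))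
  set pOut : k[G] := ofCoeff (p.coeff.filter (· ∉ M))
  have hpIn : pIn ∈ supported k k (M : Set G) := fun a ha => (Finset.mem_filter.mp ha).2
  have hp : p = pIn + pOut := ext (Finsupp.filter_add_filter_not _ _).symm
  have hpOut : pOut * q ∈ supported k k (M : Set G) := by
    rw [show pOut * q = p * q - pIn * q by rw [eq_sub_iff_add_eq, ← add_mul, add_comm, ← hp]]
    exact sub_mem hpq (mul_mem_supported hpIn hqM)
  by_cases h0 : pOut = 0
  · rwa [hp, h0, add_zero]
  obtain ⟨a, ha, d, hd, hd0, had⟩ := exists_add_mem_support_mul h0 hq hq₀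
  refine absurd ?_ (Finset.mem_filter.mp ha).2
  simpa using M.add_mem (hpOut had) (hunit d hd hd0)

end AddMonoidAlgebra

open AddMonoidAlgebra

theorem wt_add {n : ℕ} (η a b : Fin n → ℤ) : wt η (a + b) = wt η a + wt η b := by
  simp only [wt, Pi.add_apply, mul_add, Finset.sum_add_distrib]

def wtHom {n : ℕ} (η : Fin n → ℤ) : (Fin n → ℤ) →+ ℤ :=
  AddMonoidHom.mk' (wt η) (wt_add η)

/-- The lattice points of `A` on the face of `conv A` where `wt η` is minimal. -/
def minFace {n : ℕ} (η : Fin n → ℤ) (A : Finset (Fin n → ℤ)) : Finset (Fin n → ℤ) :=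
  A.filter fun a => ∀ c ∈ A, wt η a ≤ wt η c

theorem sub_mem_Mface {n : ℕ} {A F : Finset (Fin n → ℤ)} {a b : Fin n → ℤ} (ha : a ∈ A)
    (hb : b ∈ F) : a - b ∈ Mface A F :=
  AddSubmonoid.subset_closure ⟨a, ha, b, hb, rfl⟩

section Face

variable {n : ℕ} {k : Type*} [Ring k] {f : k[Fin n → ℤ]} {η b d : Fin n → ℤ}

theorem add_mem_support_of_mem_support_single_neg_mul
    (hd : d ∈ (single (-b) (1 : k) * f).coeff.support) : b + d ∈ f.coeff.support := by
  simpa [Finsupp.mem_support_iff] using hd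

theorem single_neg_mul_mem_supported_Mface {F : Finset (Fin n → ℤ)} (hb : b ∈ F) :
    single (-b) (1 : k) * f ∈ supported k k (Mface f.coeff.support F : Set (Fin n → ℤ)) :=
  fun d hd => by
    simpa using sub_mem_Mface (add_mem_support_of_mem_support_single_neg_mul hd) hb

theorem wt_nonneg_of_mem_support_single_neg_mul (hb : b ∈ minFace η f.coeff.support)
    (hd : d ∈ (single (-b) (1 : k) * f).coeff.support) : 0 ≤ wt η d := by
  have hbd := (Finset.mem_filter.mp hb).2 _ (add_mem_support_of_mem_support_single_neg_mul hd)
  rw [wt_add] at hbd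
  omega

theorem weightPart_single_neg_mul_ne_zero (hb : b ∈ f.coeff.support) :
    weightPart (wtHom η) 0 (single (-b) (1 : k) * f) ≠ 0 :=
  weightPart_ne_zero (x := 0) (by simpa [Finsupp.mem_support_iff] using hb) (map_zero _)

theorem neg_mem_Mface_of_wt_eq_zero (hb : b ∈ minFace η f.coeff.support)
    (hd : d ∈ (single (-b) (1 : k) * f).coeff.support) (hd0 : wt η d = 0) :
    -d ∈ Mface f.coeff.support (minFace η f.coeff.support) := by
  obtain ⟨hbA, hbmin⟩ := Finset.mem_filter.mp hb
  have hbd := add_mem_support_of_mem_support_single_neg_mul hd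
  have hbdF : b + d ∈ minFace η f.coeff.support :=
    Finset.mem_filter.mpr ⟨hbd, fun c hc => by rw [wt_add, hd0, add_zero]; exact hbmin c hc⟩
  simpa using sub_mem_Mface hbA hbdF

end Face

/-- Let `f` be a Laurent polynomial with support `A`, let `𝓕 = F ∩ A` be the points
of `A` on the face of `conv(A)` minimizing the linear form `η`, and let `b ∈ 𝓕`.
Then `t^{−b}·f` lies in the monoid algebra `ℂ[M_𝓕]` (its support is in `M_𝓕`), and
the ideal generated by `f` in `ℂ[ℤⁿ]` intersected with `ℂ[M_𝓕]` is the principal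
ideal of `ℂ[M_𝓕]` generated by `t^{−b}·f`. -/
theorem stmt17 {n : ℕ} (f : AddMonoidAlgebra ℂ (Fin n → ℤ)) (η : Fin n → ℤ)
    (F : Finset (Fin n → ℤ))
    (hF : F = f.coeff.support.filter (fun a => ∀ c ∈ f.coeff.support, wt η a ≤ wt η c))
    (b : Fin n → ℤ) (hb : b ∈ F) :
    (∀ m ∈ (AddMonoidAlgebra.single (-b) (1 : ℂ) * f).coeff.support, m ∈ Mface f.coeff.support F) ∧
      ∀ g : AddMonoidAlgebra ℂ (Fin n → ℤ), (∀ m ∈ g.coeff.support, m ∈ Mface f.coeff.support F) →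
        ((∃ h : AddMonoidAlgebra ℂ (Fin n → ℤ), g = h * f) ↔
          ∃ h : AddMonoidAlgebra ℂ (Fin n → ℤ),
            (∀ m ∈ h.coeff.support, m ∈ Mface f.coeff.support F) ∧
              g = h * (AddMonoidAlgebra.single (-b) (1 : ℂ) * f)) := by
  change F = minFace η f.coeff.support at hF
  subst hF
  have hq := single_neg_mul_mem_supported_Mface (k := ℂ) (f := f) hb
  refine ⟨hq, fun g hg => ⟨?_, ?_⟩⟩
  · rintro ⟨h, rfl⟩
    have hshift : single b 1 * h * (single (-b) 1 * f) = h * f := by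
      rw [mul_mul_mul_comm, single_mul_single, add_neg_cancel, one_mul, ← one_def, one_mul]
    refine ⟨single b 1 * h, ?_, hshift.symm⟩
    exact mem_supported_of_mul_mem_supported (wtHom η) hq
      (fun d hd => wt_nonneg_of_mem_support_single_neg_mul hb hd)
      (weightPart_single_neg_mul_ne_zero (Finset.mem_filter.mp hb).1)
      (fun d hd => neg_mem_Mface_of_wt_eq_zero hb hd) (hshift ▸ hg)
  · rintro ⟨h, -, rfl⟩
    exact ⟨h * single (-b) 1, (mul_assoc h _ f).symm⟩
end
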